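/- arXiv:2310.14250 — 6 statements merged into one kernel-verified Lean document; each statement's English description precedes it below -/
import Mathlib

section
/- Let p > 1 with Hölder conjugate p' = p/(p−1). There exists a constant c₃ > 0, depending only on p, b₁, b₂, b₃, with the following property: for every finite-dimensional real inner product space E and every bijection G : E → E satisfying (G2) and (G3), the inverse map satisfies ‖G^{-1}(η)‖ ≤ c₃(1 + ‖η‖^{p'−1}) for all η ∈ E. -/
open scoped RealInnerProductSpace

/-!
If `G ξ = η`, coercivity and Cauchy–Schwarz give `b₁ ‖ξ‖ ^ p - b₂ ≤ ‖η‖ ‖ξ‖`. For `‖ξ‖ ≥ 1` this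
yields `b₁ ‖ξ‖ ^ (p - 1) ≤ b₂ + ‖η‖`, and taking `(p - 1)⁻¹`-th powers bounds `‖ξ‖` by a multiple
of `1 + ‖η‖ ^ (p - 1)⁻¹`; note `(p - 1)⁻¹ = p' - 1`.
-/

namespace Real

theorem add_rpow_le_two_rpow_mul_add_rpow {x y r : ℝ} (hx : 0 ≤ x) (hy : 0 ≤ y) (hr : 0 ≤ r) :
    (x + y) ^ r ≤ 2 ^ r * (x ^ r + y ^ r) := by
  wlog hxy : x ≤ y generalizing x y
  · rw [add_comm x, add_comm (x ^ r)]
    exact this hy hx (le_of_not_ge hxy)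
  calc (x + y) ^ r ≤ (2 * y) ^ r := rpow_le_rpow (by positivity) (by linarith) hr
    _ = 2 ^ r * y ^ r := mul_rpow zero_le_two hy
    _ ≤ 2 ^ r * (x ^ r + y ^ r) := by
      gcongr
      exact le_add_of_nonneg_left (rpow_nonneg hx r)

end Real

open Real

section Coercive

variable {p b₁ b₂ : ℝ}

theorem le_max_one_rpow_of_coercive {s t : ℝ} (hp : 1 < p) (hb₁ : 0 < b₁) (hb₂ : 0 ≤ b₂)
    (hs : 0 ≤ s) (ht : 0 ≤ t) (h : b₁ * t ^ p - b₂ ≤ s * t) :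
    t ≤ max 1 (((b₂ + s) / b₁) ^ (p - 1)⁻¹) := by
  rcases le_or_gt t 1 with ht1 | ht1
  · exact le_max_of_le_left ht1
  refine le_max_of_le_right ?_
  have ht0 : 0 < t := one_pos.trans ht1
  rw [le_rpow_inv_iff_of_pos ht (by positivity) (by linarith), le_div_iff₀ hb₁]
  have hsplit : t ^ p = t ^ (p - 1) * t := by rw [rpow_sub_one ht0.ne', div_mul_cancel₀ _ ht0.ne']
  have : t ^ (p - 1) * b₁ * t ≤ (b₂ + s) * t := by nlinarith
  exact le_of_mul_le_mul_right this ht0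

theorem exists_le_mul_one_add_rpow_of_coercive (hp : 1 < p) (hb₁ : 0 < b₁) (hb₂ : 0 ≤ b₂) :
    ∃ c > 0, ∀ s t : ℝ, 0 ≤ s → 0 ≤ t → b₁ * t ^ p - b₂ ≤ s * t →
      t ≤ c * (1 + s ^ (p - 1)⁻¹) := by
  set r := (p - 1)⁻¹
  have hr : 0 ≤ r := inv_nonneg.2 (by linarith)
  set A := (b₂ / b₁) ^ r
  set B := (b₁ ^ r)⁻¹
  have hA : 0 ≤ A := by positivity
  have hB : 0 ≤ B := by positivity
  refine ⟨1 + 2 ^ r * (A + B), by positivity, fun s t hs ht h => ?_⟩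
  have hsr : 0 ≤ s ^ r := rpow_nonneg hs r
  have hpow : ((b₂ + s) / b₁) ^ r ≤ 2 ^ r * (A + s ^ r * B) := by
    calc ((b₂ + s) / b₁) ^ r = (b₂ / b₁ + s / b₁) ^ r := by rw [add_div]
      _ ≤ 2 ^ r * (A + (s / b₁) ^ r) :=
        add_rpow_le_two_rpow_mul_add_rpow (by positivity) (by positivity) hr
      _ = 2 ^ r * (A + s ^ r * B) := by rw [div_rpow hs hb₁.le, div_eq_mul_inv]
  have h2r : 0 < (2 : ℝ) ^ r := by positivity
  refine (le_max_one_rpow_of_coercive hp hb₁ hb₂ hs ht h).trans (max_le ?_ (hpow.trans ?_))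
  · nlinarith [mul_nonneg h2r.le (add_nonneg hA hB)]
  · nlinarith [mul_nonneg h2r.le hA, mul_nonneg h2r.le hB, mul_nonneg (mul_nonneg h2r.le hB) hsr,
      mul_nonneg (mul_nonneg h2r.le hA) hsr]

end Coercive

theorem inverse_operator_growth_general
    (p b₁ b₂ b₃ : ℝ) (hp : 1 < p) (hb₁ : 0 < b₁) (hb₂ : 0 ≤ b₂) :
    ∃ c₃ > (0 : ℝ),
      ∀ (E : Type) [NormedAddCommGroup E] [InnerProductSpace ℝ E]
        [FiniteDimensional ℝ E] (G : E → E),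
        Function.Bijective G →
        (∀ ξ : E, b₁ * ‖ξ‖ ^ p - b₂ ≤ ⟪G ξ, ξ⟫) →
        (∀ ξ : E, ‖G ξ‖ ≤ b₃ * (1 + ‖ξ‖ ^ (p - 1))) →
        ∀ η : E, ‖Function.invFun G η‖ ≤ c₃ * (1 + ‖η‖ ^ (p / (p - 1) - 1)) := by
  obtain ⟨c, hc, hgrowth⟩ := exists_le_mul_one_add_rpow_of_coercive hp hb₁ hb₂
  have hexp : p / (p - 1) - 1 = (p - 1)⁻¹ := by
    field_simp [(sub_pos.2 hp).ne']
    ring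
  refine ⟨c, hc, fun E _ _ _ G hG hcoercive _ η => ?_⟩
  set ξ := Function.invFun G η
  have hGξ : G ξ = η := Function.invFun_eq (hG.surjective η)
  rw [hexp]
  refine hgrowth ‖η‖ ‖ξ‖ (norm_nonneg η) (norm_nonneg ξ) ?_
  calc b₁ * ‖ξ‖ ^ p - b₂ ≤ ⟪G ξ, ξ⟫ := hcoercive ξ
    _ ≤ ‖η‖ * ‖ξ‖ := hGξ ▸ real_inner_le_norm (G ξ) ξ

/-- Growth of the inverse operator.  For `p > 1` with conjugate
`p' = p/(p-1)`, there is a constant `c₃ > 0` depending only on `p, b₁, b₂, b₃` such that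
for every finite-dimensional real inner product space `E` and every bijection `G : E → E`
satisfying (G2) and (G3), one has `‖G⁻¹(η)‖ ≤ c₃ (1 + ‖η‖^(p'-1))` for all `η`. -/
theorem inverse_operator_growth
    (p b₁ b₂ b₃ : ℝ) (hp : 1 < p) (hb₁ : 0 < b₁) (hb₂ : 0 ≤ b₂) (hb₃ : 0 < b₃) :
    ∃ c₃ > (0 : ℝ),
      ∀ (E : Type) [NormedAddCommGroup E] [InnerProductSpace ℝ E]
        [FiniteDimensional ℝ E] (G : E → E),
        Function.Bijective G →
        (∀ ξ : E, b₁ * ‖ξ‖ ^ p - b₂ ≤ ⟪G ξ, ξ⟫) →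
        (∀ ξ : E, ‖G ξ‖ ≤ b₃ * (1 + ‖ξ‖ ^ (p - 1))) →
        ∀ η : E, ‖Function.invFun G η‖ ≤ c₃ * (1 + ‖η‖ ^ (p / (p - 1) - 1)) :=
  inverse_operator_growth_general p b₁ b₂ b₃ hp hb₁ hb₂
end

section
/- Let p > 1 with Hölder conjugate p' = p/(p−1). There exist constants c₁ > 0 and c₂ ≥ 0, depending only on p, b₁, b₂, b₃, with the following property: for every finite-dimensional real inner product space E and every bijection G : E → E satisfying (G2) and (G3), the inverse map satisfies ⟪G^{-1}(η), η⟫ ≥ c₁‖η‖^{p'} − c₂ for all η ∈ E. -/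
open scoped RealInnerProductSpace

/-!
Write `η = G ξ`. By (G3), once `‖η‖ ≥ 2 b₃` the constant term is absorbed and
`‖η‖ ≤ 2 b₃ ‖ξ‖^(p-1)`; raising to the power `p'` gives `(‖η‖ / (2 b₃))^p' ≤ ‖ξ‖^p`, and for
`‖η‖ ≤ 2 b₃` the left side is at most `1`. Then (G2) bounds `b₁ ‖ξ‖^p` by `⟪η, ξ⟫ + b₂`.
-/

lemma rpow_conj_sub_one_le_rpow_of_le {p b x y : ℝ} (hp : 1 < p) (hb : 0 < b) (hx : 0 ≤ x)
    (hy : 0 ≤ y) (h : y ≤ b * (1 + x ^ (p - 1))) :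
    (y / (2 * b)) ^ (p / (p - 1)) - 1 ≤ x ^ p := by
  have hp1 : 0 < p - 1 := by linarith
  have hq : 0 ≤ p / (p - 1) := by positivity
  rcases le_or_gt y (2 * b) with hsmall | hlarge
  · have : (y / (2 * b)) ^ (p / (p - 1)) ≤ 1 :=
      Real.rpow_le_one (by positivity) ((div_le_one (by positivity)).2 hsmall) hq
    linarith [Real.rpow_nonneg hx p]
  · have hbase : y / (2 * b) ≤ x ^ (p - 1) := by
      rw [div_le_iff₀ (by positivity)]
      nlinarith
    calc (y / (2 * b)) ^ (p / (p - 1)) - 1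
        ≤ (x ^ (p - 1)) ^ (p / (p - 1)) := by
          linarith [Real.rpow_le_rpow (by positivity) hbase hq]
      _ = x ^ p := by rw [← Real.rpow_mul hx, mul_div_cancel₀ p hp1.ne']

lemma le_inner_of_coercive_of_growth {E : Type*} [NormedAddCommGroup E] [InnerProductSpace ℝ E]
    {p b₁ b₂ b₃ : ℝ} (hp : 1 < p) (hb₁ : 0 ≤ b₁) (hb₃ : 0 < b₃) {ξ η : E}
    (hcoercive : b₁ * ‖ξ‖ ^ p - b₂ ≤ ⟪η, ξ⟫) (hgrowth : ‖η‖ ≤ b₃ * (1 + ‖ξ‖ ^ (p - 1))) :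
    b₁ / (2 * b₃) ^ (p / (p - 1)) * ‖η‖ ^ (p / (p - 1)) - (b₁ + b₂) ≤ ⟪ξ, η⟫ := by
  have hrpow := rpow_conj_sub_one_le_rpow_of_le hp hb₃ (norm_nonneg ξ) (norm_nonneg η) hgrowth
  have hscale : b₁ / (2 * b₃) ^ (p / (p - 1)) * ‖η‖ ^ (p / (p - 1))
      = b₁ * (‖η‖ / (2 * b₃)) ^ (p / (p - 1)) := by
    rw [Real.div_rpow (norm_nonneg η) (by positivity)]
    ring
  rw [hscale, real_inner_comm]
  linarith [mul_le_mul_of_nonneg_left hrpow hb₁]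

/-- Coercivity of the inverse operator.  For `p > 1` with conjugate
`p' = p/(p-1)`, there are constants `c₁ > 0` and `c₂ ≥ 0` depending only on
`p, b₁, b₂, b₃` such that for every finite-dimensional real inner product space `E` and
every bijection `G : E → E` satisfying (G2) and (G3), one has
`⟪G⁻¹(η), η⟫ ≥ c₁‖η‖^{p'} - c₂` for all `η`. -/
theorem inverse_operator_coercivity
    (p b₁ b₂ b₃ : ℝ) (hp : 1 < p) (hb₁ : 0 < b₁) (hb₂ : 0 ≤ b₂) (hb₃ : 0 < b₃) :
    ∃ c₁ > (0 : ℝ), ∃ c₂ ≥ (0 : ℝ),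
      ∀ (E : Type) [NormedAddCommGroup E] [InnerProductSpace ℝ E]
        [FiniteDimensional ℝ E] (G : E → E),
        Function.Bijective G →
        (∀ ξ : E, b₁ * ‖ξ‖ ^ p - b₂ ≤ ⟪G ξ, ξ⟫) →
        (∀ ξ : E, ‖G ξ‖ ≤ b₃ * (1 + ‖ξ‖ ^ (p - 1))) →
        ∀ η : E, c₁ * ‖η‖ ^ (p / (p - 1)) - c₂ ≤ ⟪Function.invFun G η, η⟫ := by
  have hp1 : 0 < p - 1 := by linarith
  refine ⟨b₁ / (2 * b₃) ^ (p / (p - 1)), by positivity, b₁ + b₂, by linarith, ?_⟩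
  intro E _ _ _ G hG hcoercive hgrowth η
  have hη : G (Function.invFun G η) = η := Function.rightInverse_invFun hG.surjective η
  have := le_inner_of_coercive_of_growth hp hb₁.le hb₃
    (hcoercive (Function.invFun G η)) (hgrowth (Function.invFun G η))
  rwa [hη] at this
end

section
/- Let p > 1 with Hölder conjugate p' = p/(p−1). There exists a constant c₄ > 0, depending only on p, b₁, b₂, b₃, with the following property: for every finite-dimensional real inner product space E and every convex, everywhere differentiable function φ : E → ℝ with φ(0) = 0 whose gradient G = ∇φ is strictly monotone and satisfies (G2) and (G3), the Legendre conjugate satisfies 0 ≤ φ*(η) ≤ c₄(1 + ‖η‖^{p'}) for all η ∈ E. -/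
/-!
Convexity gives `φ (x + x) ≥ φ x + ⟪G x, x⟫` and `φ x ≥ φ 0 + ⟪G 0, x⟫`, so by coercivity (G2)
and `‖G 0‖ ≤ b₃` (from (G3)) the function grows like `b₁ ‖ξ / 2‖ ^ p` up to a linear term.
Hence `⟪η, ξ⟫ - φ ξ ≤ (2 ‖η‖ + b₃) t - b₁ t ^ p + b₂` with `t = ‖ξ / 2‖`, and Young's inequality
bounds the right-hand side, uniformly in `t`, by a multiple of `1 + ‖η‖ ^ p'`.
-/

open scoped RealInnerProductSpace

open Set

theorem ConvexOn.add_apply_sub_le_of_hasFDerivAt {E : Type*} [NormedAddCommGroup E]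
    [NormedSpace ℝ E] {φ : E → ℝ} {φ' : E →L[ℝ] ℝ} {x : E} (hφ : ConvexOn ℝ univ φ)
    (hd : HasFDerivAt φ φ' x) (y : E) : φ x + φ' (y - x) ≤ φ y := by
  set L : ℝ →ᵃ[ℝ] E := AffineMap.lineMap x y with hL
  have hconv : ConvexOn ℝ univ (φ ∘ L) := by simpa using hφ.comp_affineMap L
  have hL0 : L 0 = x := by simp [hL]
  have hderiv : HasDerivAt (φ ∘ L) (φ' (y - x)) 0 :=
    (hL0 ▸ hd : HasFDerivAt φ φ' (L 0)).comp_hasDerivAt 0 AffineMap.hasDerivAt_lineMap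
  have hslope := hconv.le_slope_of_hasDerivAt (mem_univ 0) (mem_univ 1) zero_lt_one hderiv
  have hslope_eq : slope (φ ∘ L) 0 1 = φ y - φ x := by simp [slope, hL]
  linarith

theorem le_apply_add_self_of_coercive_gradient {E : Type*} [NormedAddCommGroup E]
    [InnerProductSpace ℝ E] {φ : E → ℝ} {G : E → E} {p b₁ b₂ : ℝ} (hφ0 : φ 0 = 0)
    (hconv : ConvexOn ℝ univ φ) (hderiv : ∀ ξ, HasFDerivAt φ (innerSL ℝ (G ξ)) ξ)
    (hcoercive : ∀ ξ, b₁ * ‖ξ‖ ^ p - b₂ ≤ ⟪G ξ, ξ⟫) (x : E) :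
    b₁ * ‖x‖ ^ p - ‖G 0‖ * ‖x‖ - b₂ ≤ φ (x + x) := by
  have hfrom_zero : ⟪G 0, x⟫ ≤ φ x := by
    simpa [hφ0] using hconv.add_apply_sub_le_of_hasFDerivAt (hderiv 0) x
  have hfrom_x : φ x + ⟪G x, x⟫ ≤ φ (x + x) := by
    simpa using hconv.add_apply_sub_le_of_hasFDerivAt (hderiv x) (x + x)
  have hcs : -(‖G 0‖ * ‖x‖) ≤ ⟪G 0, x⟫ := neg_le_of_abs_le (abs_real_inner_le_norm _ _)
  linarith [hcoercive x]

theorem exists_mul_sub_rpow_le {p q c : ℝ} (hpq : p.HolderConjugate q) (hc : 0 < c) :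
    ∃ K > 0, ∀ A t : ℝ, 0 ≤ A → 0 ≤ t → A * t - c * t ^ p ≤ K * A ^ q := by
  have hp0 : 0 < p := hpq.pos
  have hq0 : 0 < q := hpq.symm.pos
  have hpc : 0 < p * c := by positivity
  -- Young's inequality for `(λ t) (A / λ)`, with `λ ^ p = p c`.
  set lam : ℝ := (p * c) ^ p⁻¹ with hlam
  have hlam0 : 0 < lam := Real.rpow_pos_of_pos hpc _
  have hlamp : lam ^ p = p * c := by
    rw [hlam, ← Real.rpow_mul hpc.le, inv_mul_cancel₀ hp0.ne', Real.rpow_one]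
  refine ⟨(q * lam ^ q)⁻¹, by positivity, fun A t hA ht => ?_⟩
  have hyoung := Real.young_inequality_of_nonneg (mul_nonneg hlam0.le ht)
    (div_nonneg hA hlam0.le) hpq
  have hprod : lam * t * (A / lam) = A * t := by field_simp
  have hfirst : (lam * t) ^ p / p = c * t ^ p := by
    rw [Real.mul_rpow hlam0.le ht, hlamp]
    field_simp
  have hsecond : (A / lam) ^ q / q = (q * lam ^ q)⁻¹ * A ^ q := by
    rw [Real.div_rpow hA hlam0.le, div_div, inv_mul_eq_div, mul_comm]
  rw [hprod, hfirst, hsecond] at hyoung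
  linarith

theorem Real.one_add_rpow_le {a q : ℝ} (ha : 0 ≤ a) (hq : 1 ≤ q) :
    (1 + a) ^ q ≤ 2 ^ (q - 1) * (1 + a ^ q) := by
  lift a to NNReal using ha
  have := NNReal.rpow_add_le_mul_rpow_add_rpow 1 a hq
  rw [NNReal.one_rpow] at this
  exact_mod_cast this

theorem exists_affine_mul_sub_rpow_le {p q c α β : ℝ} (hpq : p.HolderConjugate q) (hc : 0 < c)
    (hα : 0 ≤ α) (hβ : 0 ≤ β) :
    ∃ C > 0, ∀ a t : ℝ, 0 ≤ a → 0 ≤ t → (α * a + β) * t - c * t ^ p ≤ C * (1 + a ^ q) := by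
  obtain ⟨K, hK, hyoung⟩ := exists_mul_sub_rpow_le hpq hc
  have hq0 : 0 ≤ q := hpq.symm.nonneg
  set M := α + β + 1
  refine ⟨K * (M ^ q * 2 ^ (q - 1)), by positivity, fun a t ha ht => ?_⟩
  have hcoeff : α * a + β ≤ M * (1 + a) := by nlinarith
  have hpow : (α * a + β) ^ q ≤ M ^ q * 2 ^ (q - 1) * (1 + a ^ q) :=
    calc (α * a + β) ^ q ≤ (M * (1 + a)) ^ q := by gcongr
      _ = M ^ q * (1 + a) ^ q := Real.mul_rpow (by positivity) (by positivity)
      _ ≤ M ^ q * (2 ^ (q - 1) * (1 + a ^ q)) := by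
        gcongr; exact Real.one_add_rpow_le ha hpq.symm.lt.le
      _ = _ := by ring
  calc (α * a + β) * t - c * t ^ p ≤ K * (α * a + β) ^ q := hyoung _ t (by positivity) ht
    _ ≤ K * (M ^ q * 2 ^ (q - 1) * (1 + a ^ q)) := by gcongr
    _ = _ := by ring

/-- Bounds on the Legendre conjugate.  For `p > 1` with conjugate
`p' = p/(p-1)`, there is a constant `c₄ > 0` depending only on `p, b₁, b₂, b₃` such that
for every finite-dimensional real inner product space `E` and every convex, everywhere
differentiable `φ : E → ℝ` with `φ(0) = 0` whose gradient `G` is strictly monotone and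
satisfies (G2) and (G3), one has `0 ≤ φ*(η) ≤ c₄ (1 + ‖η‖^{p'})` for all `η`
(the supremum defining `φ*(η)` is nonnegative and bounded above by `c₄(1 + ‖η‖^{p'})`). -/
theorem legendre_conjugate_bounds
    (p b₁ b₂ b₃ : ℝ) (hp : 1 < p) (hb₁ : 0 < b₁) (hb₂ : 0 ≤ b₂) (hb₃ : 0 < b₃) :
    ∃ c₄ > (0 : ℝ),
      ∀ (E : Type) [NormedAddCommGroup E] [InnerProductSpace ℝ E]
        [FiniteDimensional ℝ E] (φ : E → ℝ) (G : E → E),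
        φ 0 = 0 →
        ConvexOn ℝ Set.univ φ →
        (∀ ξ : E, HasFDerivAt φ (innerSL ℝ (G ξ)) ξ) →
        (∀ ξ₁ ξ₂ : E, ξ₁ ≠ ξ₂ → 0 < ⟪G ξ₁ - G ξ₂, ξ₁ - ξ₂⟫) →
        (∀ ξ : E, b₁ * ‖ξ‖ ^ p - b₂ ≤ ⟪G ξ, ξ⟫) →
        (∀ ξ : E, ‖G ξ‖ ≤ b₃ * (1 + ‖ξ‖ ^ (p - 1))) →
        ∀ η : E,
          (∃ ξ : E, (0 : ℝ) ≤ ⟪η, ξ⟫ - φ ξ) ∧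
          (∀ ξ : E, ⟪η, ξ⟫ - φ ξ ≤ c₄ * (1 + ‖η‖ ^ (p / (p - 1)))) := by
  have hpq : p.HolderConjugate (p / (p - 1)) := (Real.holderConjugate_iff_eq_conjExponent hp).2 rfl
  obtain ⟨C, hC, hbound⟩ :=
    exists_affine_mul_sub_rpow_le (α := 2) (β := b₃) hpq hb₁ zero_le_two hb₃.le
  refine ⟨C + b₂, by positivity, ?_⟩
  intro E _ _ _ φ G hφ0 hconv hderiv _ hcoercive hgrowth η
  refine ⟨⟨0, by simp [hφ0]⟩, fun ξ => ?_⟩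
  have hG0 : ‖G 0‖ ≤ b₃ := by
    simpa [Real.zero_rpow (sub_ne_zero.2 hp.ne')] using hgrowth 0
  set x : E := (2⁻¹ : ℝ) • ξ
  have hξ : ξ = x + x := by module
  have hlower := le_apply_add_self_of_coercive_gradient hφ0 hconv hderiv hcoercive x
  have hinner : ⟪η, ξ⟫ ≤ 2 * ‖η‖ * ‖x‖ := by
    rw [hξ, inner_add_right]
    linarith [real_inner_le_norm η x]
  rw [← hξ] at hlower
  calc ⟪η, ξ⟫ - φ ξ ≤ (2 * ‖η‖ + b₃) * ‖x‖ - b₁ * ‖x‖ ^ p + b₂ := by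
        linarith [mul_le_mul_of_nonneg_right hG0 (norm_nonneg x)]
    _ ≤ C * (1 + ‖η‖ ^ (p / (p - 1))) + b₂ := by
        linarith [hbound ‖η‖ ‖x‖ (norm_nonneg η) (norm_nonneg x)]
    _ ≤ (C + b₂) * (1 + ‖η‖ ^ (p / (p - 1))) := by
        linarith [mul_nonneg hb₂ (by positivity : 0 ≤ ‖η‖ ^ (p / (p - 1)))]
end

section
/- (Browder–Minty) Let X be a real reflexive Banach space, i.e. the canonical inclusion of X into its double dual is surjective, and let F : X → X' be a map into the continuous dual of X which is monotone (⟨F(u) − F(v), u − v⟩ ≥ 0 for all u, v ∈ X), hemicontinuous (for all u, v, w ∈ X the map t ↦ ⟨F(u + t v), w⟩ is continuous from ℝ to ℝ), and coercive (⟨F(v), v⟩ / ‖v‖ → ∞ as ‖v‖ → ∞). Then F is surjective. If moreover F is strictly monotone (⟨F(u) − F(v), u − v⟩ > 0 whenever u ≠ v), then F is also injective, hence bijective. -/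
/-!
Galerkin approximation. On a finite-dimensional subspace `V`, the restriction of `F - b` is
monotone and hemicontinuous, hence continuous (monotone maps are locally bounded in finite
dimension, and Minty's trick identifies every cluster value), and by coercivity it is
nonnegative on a large sphere. Such a map has a zero: after adding `ε • id` it becomes strongly
monotone, and a continuous strongly monotone map of a Euclidean space has a zero by induction on
the dimension, without any fixed point theorem (solve on the hyperplane `eᗮ` at each height `t`;
the solution depends continuously on `t`, and the intermediate value theorem chooses `t`).
Coercivity bounds these Galerkin solutions `u_V` uniformly, so by reflexivity and Banach–Alaoglu
they have a weak cluster point `u`; passing to the limit in `⟨F u_V - F w, u_V - w⟩ ≥ 0` gives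
`⟨b - F w, u - w⟩ ≥ 0` for all `w`, and Minty's trick (`w = u + t • v`, `t → 0⁺`) yields `F u = b`.
-/

open Filter Topology Metric Module
open scoped InnerProductSpace

section Operator

variable {X : Type*} [NormedAddCommGroup X] [NormedSpace ℝ X]

def IsMonotoneOperator (F : X → StrongDual ℝ X) : Prop :=
  ∀ u v, 0 ≤ (F u - F v) (u - v)

def Hemicontinuous (F : X → StrongDual ℝ X) : Prop :=
  ∀ u v w, Continuous fun t : ℝ => F (u + t • v) w

theorem Hemicontinuous.le_apply_of_forall_nonneg {F : X → StrongDual ℝ X} (hF : Hemicontinuous F)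
    {u : X} {φ : StrongDual ℝ X} (h : ∀ w, 0 ≤ (φ - F w) (u - w)) (v : X) : φ v ≤ F u v := by
  have hlim : Tendsto (fun t : ℝ => F (u + t • v) v) (𝓝[>] 0) (𝓝 (F u v)) := by
    simpa using ((hF u v v).tendsto 0).mono_left nhdsWithin_le_nhds
  refine ge_of_tendsto hlim (eventually_nhdsWithin_of_forall fun t (ht : 0 < t) => ?_)
  have := h (u + t • v)
  rw [sub_add_cancel_left, map_neg, map_smul, sub_apply, smul_eq_mul] at this
  nlinarith

theorem Hemicontinuous.eq_of_forall_nonneg {F : X → StrongDual ℝ X} (hF : Hemicontinuous F)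
    {u : X} {φ : StrongDual ℝ X} (h : ∀ w, 0 ≤ (φ - F w) (u - w)) : F u = φ :=
  ContinuousLinearMap.ext fun v => le_antisymm
    (by simpa using hF.le_apply_of_forall_nonneg h (-v)) (hF.le_apply_of_forall_nonneg h v)

end Operator

section InnerProduct

variable {E : Type*} [NormedAddCommGroup E] [InnerProductSpace ℝ E]

def IsStronglyMonotone (m : ℝ) (g : E → E) : Prop :=
  ∀ x y, m * ‖x - y‖ ^ 2 ≤ ⟪g x - g y, x - y⟫_ℝ

theorem mul_norm_le_of_mul_norm_sq_le_inner {m : ℝ} {a b : E}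
    (h : m * ‖a‖ ^ 2 ≤ ⟪b, a⟫_ℝ) : m * ‖a‖ ≤ ‖b‖ := by
  rcases (norm_nonneg a).eq_or_lt with ha | ha
  · rw [← ha, mul_zero]
    exact norm_nonneg b
  · nlinarith [real_inner_le_norm b a]

theorem continuous_of_isStronglyMonotone_of_eq_zero {P : Type*} [TopologicalSpace P]
    {m : ℝ} (hm : 0 < m) {g : P → E → E} (hg : ∀ x, Continuous fun p => g p x)
    (hgm : ∀ p, IsStronglyMonotone m (g p)) {y : P → E} (hy : ∀ p, g p (y p) = 0) :
    Continuous y := by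
  refine continuous_iff_continuousAt.2 fun s => tendsto_iff_norm_sub_tendsto_zero.2 ?_
  have hbound : ∀ p, ‖y p - y s‖ ≤ ‖g p (y s)‖ / m := fun p => by
    rw [le_div_iff₀ hm, mul_comm]
    simpa [hy p] using mul_norm_le_of_mul_norm_sq_le_inner (hgm p (y p) (y s))
  have hlim : Tendsto (fun p => ‖g p (y s)‖ / m) (𝓝 s) (𝓝 0) := by
    simpa [hy s] using ((hg (y s)).norm.div_const m).tendsto s
  exact squeeze_zero (fun _ => norm_nonneg _) hbound hlim

theorem exists_eq_zero_of_strongly_monotone_real {f : ℝ → ℝ} (hf : Continuous f) {m : ℝ}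
    (hm : 0 < m) (h : ∀ s t, m * (t - s) ^ 2 ≤ (f t - f s) * (t - s)) : ∃ t, f t = 0 := by
  set T := (|f 0| + 1) / m
  have hT : 0 < T := by positivity
  have hmT : m * T = |f 0| + 1 := mul_div_cancel₀ _ hm.ne'
  have hpos : 0 ≤ f T := by nlinarith [h 0 T, le_abs_self (f 0), neg_abs_le (f 0)]
  have hneg : f (-T) ≤ 0 := by nlinarith [h (-T) 0, le_abs_self (f 0), neg_abs_le (f 0)]
  obtain ⟨t, -, ht⟩ := intermediate_value_Icc (by linarith) hf.continuousOn ⟨hneg, hpos⟩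
  exact ⟨t, ht⟩

theorem IsStronglyMonotone.strongly_monotone_inner_of_orthogonal {m : ℝ} (hm : 0 ≤ m)
    {g : E → E} (hgm : IsStronglyMonotone m g) {e : E} (he : ‖e‖ = 1) {y : ℝ → (ℝ ∙ e)ᗮ}
    (horth : ∀ t (k : (ℝ ∙ e)ᗮ), ⟪g (y t + t • e), k⟫_ℝ = 0) (s t : ℝ) :
    m * (t - s) ^ 2 ≤ (⟪g (y t + t • e), e⟫_ℝ - ⟪g (y s + s • e), e⟫_ℝ) * (t - s) := by
  set x : ℝ → E := fun t => y t + t • e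
  have he_orth : ∀ k : (ℝ ∙ e)ᗮ, ⟪e, k⟫_ℝ = 0 := fun k =>
    Submodule.mem_orthogonal_singleton_iff_inner_right.1 k.2
  have hxts : x t - x s = ((y t - y s : (ℝ ∙ e)ᗮ) : E) + (t - s) • e := by
    simp only [x, Submodule.coe_sub, sub_smul]; abel
  have hdist : |t - s| ≤ ‖x t - x s‖ := by
    have := abs_real_inner_le_norm e (x t - x s)
    rwa [hxts, inner_add_right, he_orth, inner_smul_right, real_inner_self_eq_norm_sq, he,
      one_pow, mul_one, zero_add, one_mul, ← hxts] at this
  have hinner : ⟪g (x t) - g (x s), x t - x s⟫_ℝ =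
      (⟪g (x t), e⟫_ℝ - ⟪g (x s), e⟫_ℝ) * (t - s) := by
    rw [hxts, inner_add_right, inner_sub_left, horth, horth, inner_smul_right, inner_sub_left]
    ring
  calc m * (t - s) ^ 2 = m * |t - s| ^ 2 := by rw [sq_abs]
    _ ≤ m * ‖x t - x s‖ ^ 2 := by gcongr
    _ ≤ _ := hinner ▸ hgm (x t) (x s)

theorem IsStronglyMonotone.exists_eq_zero_of_orthogonal [FiniteDimensional ℝ E] {m : ℝ}
    (hm : 0 < m) {e : E} (he : ‖e‖ = 1)
    (ih : ∀ g : (ℝ ∙ e)ᗮ → (ℝ ∙ e)ᗮ, Continuous g → IsStronglyMonotone m g → ∃ y, g y = 0)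
    {g : E → E} (hg : Continuous g) (hgm : IsStronglyMonotone m g) : ∃ x, g x = 0 := by
  set K := (ℝ ∙ e)ᗮ
  set slice : ℝ → K → K := fun t y => K.orthogonalProjectionOnto (g (y + t • e))
  have hslice : ∀ t (y k : K), ⟪slice t y, k⟫_ℝ = ⟪g (y + t • e), k⟫_ℝ := fun t y k =>
    Submodule.inner_orthogonalProjectionOnto_eq_of_mem_right k _
  have hslice_cont : Continuous fun p : ℝ × K => slice p.1 p.2 := by fun_prop
  have hslice_mono : ∀ t, IsStronglyMonotone m (slice t) := fun t y y' => by
    have := hgm (y + t • e) (y' + t • e)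
    rw [add_sub_add_right_eq_sub] at this
    simpa [inner_sub_left, hslice] using this
  choose y hy using fun t => ih (slice t) (hslice_cont.comp (Continuous.prodMk_right t))
    (hslice_mono t)
  have hy_cont : Continuous y := continuous_of_isStronglyMonotone_of_eq_zero hm
    (fun y => hslice_cont.comp (Continuous.prodMk_left y)) hslice_mono hy
  have horth : ∀ t (k : K), ⟪g (y t + t • e), k⟫_ℝ = 0 := fun t k => by
    rw [← hslice, hy, inner_zero_left]
  obtain ⟨t₀, ht₀⟩ := exists_eq_zero_of_strongly_monotone_real
    (f := fun t => ⟪g (y t + t • e), e⟫_ℝ) (by fun_prop) hm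
    (hgm.strongly_monotone_inner_of_orthogonal hm.le he horth)
  have hmem : g (y t₀ + t₀ • e) ∈ K :=
    Submodule.mem_orthogonal_singleton_iff_inner_right.2 (by rw [real_inner_comm]; exact ht₀)
  have hzero : (⟨_, hmem⟩ : K) = 0 := by
    rw [← K.orthogonalProjectionOnto_mem_subspace_eq_self ⟨_, hmem⟩]
    exact hy t₀
  exact ⟨_, congrArg Subtype.val hzero⟩

theorem IsStronglyMonotone.exists_eq_zero [FiniteDimensional ℝ E] {m : ℝ} (hm : 0 < m)
    {g : E → E} (hg : Continuous g) (hgm : IsStronglyMonotone m g) : ∃ x, g x = 0 := by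
  induction hn : finrank ℝ E generalizing E with
  | zero =>
    have : Subsingleton E := Module.finrank_zero_iff.1 hn
    exact ⟨0, Subsingleton.elim _ _⟩
  | succ n ih =>
    have : Fact (finrank ℝ E = n + 1) := ⟨hn⟩
    have : Nontrivial E := Module.nontrivial_of_finrank_eq_succ hn
    obtain ⟨v, hv⟩ := exists_ne (0 : E)
    have he : ‖‖v‖⁻¹ • v‖ = 1 := norm_smul_inv_norm hv
    refine hgm.exists_eq_zero_of_orthogonal hm he (fun g' hg' hgm' => ih hg' hgm' ?_) hg
    exact Submodule.finrank_orthogonal_span_singleton (norm_ne_zero_iff.1 (he ▸ one_ne_zero))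

theorem norm_le_of_monotone_of_eq_neg_smul {g : E → E} (hmono : ∀ x y, 0 ≤ ⟪g x - g y, x - y⟫_ℝ)
    {R : ℝ} (hR : 0 < R) (hbd : ∀ x, ‖x‖ = R → 0 ≤ ⟪g x, x⟫_ℝ) {ε : ℝ} (hε : 0 < ε) {x : E}
    (hx : g x = -(ε • x)) : ‖x‖ ≤ R := by
  by_contra! hxR
  have hx0 : 0 < ‖x‖ := hR.trans hxR
  set c := R / ‖x‖
  have hc : 0 < c := by positivity
  have hc1 : c < 1 := (div_lt_one hx0).2 hxR
  have hcx : 0 ≤ ⟪g (c • x), x⟫_ℝ := by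
    have := hbd (c • x) (by rw [norm_smul, Real.norm_of_nonneg hc.le, div_mul_cancel₀ _ hx0.ne'])
    rw [inner_smul_right] at this
    exact nonneg_of_mul_nonneg_right (by linarith) hc
  -- compare `x` with its radial projection `c • x` onto the sphere
  have := hmono x (c • x)
  rw [show x - c • x = (1 - c) • x by rw [sub_smul, one_smul], inner_smul_right, inner_sub_left,
    hx, inner_neg_left, inner_smul_left, real_inner_self_eq_norm_sq] at this
  simp only [conj_trivial] at this
  nlinarith [mul_pos hε (pow_pos hx0 2)]

theorem exists_norm_le_eq_zero_of_monotone [FiniteDimensional ℝ E] {g : E → E}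
    (hg : Continuous g) (hmono : ∀ x y, 0 ≤ ⟪g x - g y, x - y⟫_ℝ) {R : ℝ} (hR : 0 < R)
    (hbd : ∀ x, ‖x‖ = R → 0 ≤ ⟪g x, x⟫_ℝ) : ∃ x, ‖x‖ ≤ R ∧ g x = 0 := by
  have hpert : ∀ k : ℕ, ∃ x, g x = -(((k : ℝ) + 1)⁻¹ • x) := fun k => by
    set ε : ℝ := ((k : ℝ) + 1)⁻¹
    have hgε : IsStronglyMonotone ε fun x => g x + ε • x := fun x y => by
      rw [show g x + ε • x - (g y + ε • y) = (g x - g y) + ε • (x - y) by rw [smul_sub]; abel,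
        inner_add_left, real_inner_smul_left, real_inner_self_eq_norm_sq]
      linarith [hmono x y]
    obtain ⟨x, hx⟩ := hgε.exists_eq_zero (by positivity) (by fun_prop)
    exact ⟨x, eq_neg_of_add_eq_zero_left hx⟩
  choose x hx using hpert
  have hxR : ∀ k, x k ∈ closedBall 0 R := fun k => by
    simpa using norm_le_of_monotone_of_eq_neg_smul hmono hR hbd (by positivity) (hx k)
  obtain ⟨x₀, hx₀, φ, hφ, hlim⟩ := (isCompact_closedBall 0 R).tendsto_subseq hxR
  refine ⟨x₀, by simpa using hx₀, tendsto_nhds_unique ((hg.tendsto x₀).comp hlim) ?_⟩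
  have hε : Tendsto (fun k => ((φ k : ℝ) + 1)⁻¹) atTop (𝓝 0) :=
    tendsto_inv_atTop_zero.comp (tendsto_atTop_add_const_right _ _
      (tendsto_natCast_atTop_atTop.comp hφ.tendsto_atTop))
  simpa [Function.comp_def, hx] using (hε.smul hlim).neg

end InnerProduct

section FiniteDimensional

variable {E : Type*} [NormedAddCommGroup E] [NormedSpace ℝ E] [FiniteDimensional ℝ E]

variable (E) in
theorem exists_finset_norm_le_of_forall_apply_le :
    ∃ (P : Finset E) (c : ℝ), 0 ≤ c ∧
      ∀ (ℓ : StrongDual ℝ E) (C : ℝ), (∀ p ∈ P, ℓ p ≤ C) → ‖ℓ‖ ≤ c * C := by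
  classical
  set b := Module.finBasis ℝ E
  set coord : Fin (Module.finrank ℝ E) → StrongDual ℝ E :=
    fun i => LinearMap.toContinuousLinearMap (b.coord i)
  refine ⟨Finset.univ.image b ∪ Finset.univ.image (-b ·), ∑ i, ‖coord i‖,
    Finset.sum_nonneg fun i _ => norm_nonneg _, fun ℓ C hC => ?_⟩
  have hℓ : ℓ = ∑ i, ℓ (b i) • coord i := by
    ext x
    have hx := congrArg ℓ (b.sum_repr x)
    simp only [map_sum, map_smul, smul_eq_mul] at hx
    simp [coord, ← hx, mul_comm]
  have hb : ∀ i, ‖ℓ (b i)‖ ≤ C := fun i => abs_le.2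
    ⟨neg_le.1 (by simpa using hC (-b i) (by simp)), hC (b i) (by simp)⟩
  calc ‖ℓ‖ = ‖∑ i, ℓ (b i) • coord i‖ := by rw [← hℓ]
    _ ≤ ∑ i, ‖ℓ (b i)‖ * ‖coord i‖ := (norm_sum_le _ _).trans (by simp [norm_smul])
    _ ≤ ∑ i, C * ‖coord i‖ := by gcongr with i; exact hb i
    _ = (∑ i, ‖coord i‖) * C := by rw [Finset.sum_mul]; simp only [mul_comm]

theorem IsMonotoneOperator.exists_eventually_norm_le {G : E → StrongDual ℝ E}
    (hG : IsMonotoneOperator G) (u : E) : ∃ C, ∀ᶠ z in 𝓝 u, ‖G z‖ ≤ C := by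
  obtain ⟨P, c, hc, hP⟩ := exists_finset_norm_le_of_forall_apply_le E
  set A := ∑ p ∈ P, ‖G (u + p)‖ * (‖p‖ + 1)
  set δ := min 1 (1 / (2 * c + 1))
  have hδ : 0 < δ := by positivity
  have hcδ : c * δ ≤ 1 / 2 := by
    calc c * δ ≤ c * (1 / (2 * c + 1)) := by gcongr; exact min_le_right _ _
      _ ≤ 1 / 2 := by rw [mul_one_div, div_le_div_iff₀ (by positivity) two_pos]; linarith
  refine ⟨2 * c * A, ?_⟩
  filter_upwards [closedBall_mem_nhds u hδ] with z hz
  rw [mem_closedBall, dist_eq_norm] at hz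
  have hzp : ∀ p ∈ P, G z p ≤ A + δ * ‖G z‖ := by
    intro p hp
    have hmono : G z (u + p - z) ≤ G (u + p) (u + p - z) := by
      simpa using hG (u + p) z
    have hfar : G (u + p) (u + p - z) ≤ ‖G (u + p)‖ * (‖p‖ + 1) := by
      calc G (u + p) (u + p - z) ≤ ‖G (u + p)‖ * ‖u + p - z‖ := (le_abs_self _).trans
            ((G (u + p)).le_opNorm _)
        _ ≤ ‖G (u + p)‖ * (‖p‖ + 1) := by
          gcongr
          calc ‖u + p - z‖ = ‖p - (z - u)‖ := by congr 1; abel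
            _ ≤ ‖p‖ + ‖z - u‖ := norm_sub_le _ _
            _ ≤ ‖p‖ + 1 := by linarith [min_le_left 1 (1 / (2 * c + 1))]
    have hnear : G z (z - u) ≤ δ * ‖G z‖ :=
      calc G z (z - u) ≤ ‖G z‖ * ‖z - u‖ := (le_abs_self _).trans ((G z).le_opNorm _)
        _ ≤ δ * ‖G z‖ := by rw [mul_comm]; gcongr
    calc G z p = G z (u + p - z) + G z (z - u) := by rw [← map_add]; congr 1; abel
      _ ≤ A + δ * ‖G z‖ := add_le_add (hmono.trans (hfar.trans
            (Finset.single_le_sum (f := fun p => ‖G (u + p)‖ * (‖p‖ + 1))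
              (fun p _ => by positivity) hp))) hnear
  have := hP (G z) _ hzp
  nlinarith [norm_nonneg (G z)]

theorem IsMonotoneOperator.continuous_of_hemicontinuous {G : E → StrongDual ℝ E}
    (hG : IsMonotoneOperator G) (hG' : Hemicontinuous G) : Continuous G := by
  refine continuous_iff_continuousAt.2 fun u => ?_
  obtain ⟨C, hC⟩ := hG.exists_eventually_norm_le u
  refine (isCompact_closedBall 0 C).tendsto_nhds_of_unique_mapClusterPt
    (by simpa using hC) fun ℓ _ hℓ => (hG'.eq_of_forall_nonneg fun w => ?_).symm
  obtain ⟨U, hU, hGU⟩ := mapClusterPt_iff_ultrafilter.1 hℓ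
  have hlim : Tendsto (fun z => (G z - G w) (z - w)) U (𝓝 ((ℓ - G w) (u - w))) :=
    (isBoundedBilinearMap_apply.continuous.tendsto _).comp
      ((hGU.sub tendsto_const_nhds).prodMk_nhds ((tendsto_id.mono_left hU).sub tendsto_const_nhds))
  exact ge_of_tendsto hlim (Eventually.of_forall fun z => hG z w)

theorem IsMonotoneOperator.exists_eq_zero_of_finiteDimensional {G : E → StrongDual ℝ E}
    (hG : IsMonotoneOperator G) (hG' : Hemicontinuous G) {M : ℝ}
    (hcoer : ∀ z, M ≤ ‖z‖ → 0 ≤ G z z) : ∃ u, G u = 0 := by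
  let H := EuclideanSpace ℝ (Fin (finrank ℝ E))
  let φ : E ≃L[ℝ] H := ContinuousLinearEquiv.ofFinrankEq finrank_euclideanSpace_fin.symm
  let g : H → H := fun x =>
    (InnerProductSpace.toDual ℝ H).symm ((G (φ.symm x)).comp (φ.symm : H →L[ℝ] E))
  have hg : ∀ x y, ⟪g x, y⟫_ℝ = G (φ.symm x) (φ.symm y) := fun x y =>
    InnerProductSpace.toDual_symm_apply
  have hg_cont : Continuous g := (InnerProductSpace.toDual ℝ H).symm.continuous.comp
    (((hG.continuous_of_hemicontinuous hG').comp φ.symm.continuous).clm_comp continuous_const)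
  have hg_mono : ∀ x y, 0 ≤ ⟪g x - g y, x - y⟫_ℝ := fun x y => by
    simpa [inner_sub_left, hg] using hG (φ.symm x) (φ.symm y)
  have hg_bd : ∀ x, ‖x‖ = ‖(φ : E →L[ℝ] H)‖ * |M| + 1 → 0 ≤ ⟪g x, x⟫_ℝ := fun x hx => by
    rw [hg]
    refine hcoer _ ?_
    have hle : ‖x‖ ≤ ‖(φ : E →L[ℝ] H)‖ * ‖φ.symm x‖ := by
      simpa using (φ : E →L[ℝ] H).le_opNorm (φ.symm x)
    by_contra! h
    nlinarith [mul_le_mul_of_nonneg_left h.le (norm_nonneg (φ : E →L[ℝ] H)), le_abs_self M,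
      norm_nonneg (φ : E →L[ℝ] H)]
  obtain ⟨x, -, hx⟩ := exists_norm_le_eq_zero_of_monotone hg_cont hg_mono (by positivity) hg_bd
  refine ⟨φ.symm x, ContinuousLinearMap.ext fun v => ?_⟩
  simpa [hx] using (hg x (φ v)).symm

end FiniteDimensional

section Reflexive

variable {X : Type*} [NormedAddCommGroup X] [NormedSpace ℝ X]

theorem exists_forall_lt_apply_self_of_tendsto {F : X → StrongDual ℝ X}
    (hcoer : Tendsto (fun v => F v v / ‖v‖) (comap norm atTop) atTop) (b : StrongDual ℝ X) :
    ∃ M, ∀ z, M ≤ ‖z‖ → b z < F z z := by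
  obtain ⟨M, hM⟩ := eventually_atTop.1 (eventually_comap.1
    (hcoer.eventually (eventually_ge_atTop (‖b‖ + 1))))
  refine ⟨max M 1, fun z hz => ?_⟩
  have hz1 : 1 ≤ ‖z‖ := (le_max_right _ _).trans hz
  have hFz := (le_div_iff₀ (by linarith)).1 (hM ‖z‖ ((le_max_left _ _).trans hz) z rfl)
  nlinarith [(le_abs_self (b z)).trans (b.le_opNorm z)]

theorem IsMonotoneOperator.exists_galerkin {F : X → StrongDual ℝ X} (hF : IsMonotoneOperator F)
    (hF' : Hemicontinuous F) {b : StrongDual ℝ X} {M : ℝ} (hcoer : ∀ z, M ≤ ‖z‖ → b z < F z z)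
    (V : Submodule ℝ X) [FiniteDimensional ℝ V] :
    ∃ u ∈ V, ‖u‖ ≤ M ∧ ∀ w ∈ V, F u w = b w := by
  let G : V → StrongDual ℝ V := fun x => (F x - b).comp V.subtypeL
  have hG : IsMonotoneOperator G := fun x y => by simpa [G] using hF x y
  have hG' : Hemicontinuous G := fun x y w => (hF' x y w).sub continuous_const
  obtain ⟨u, hu⟩ := hG.exists_eq_zero_of_finiteDimensional hG' (M := M) fun z hz => by
    simpa [G] using (hcoer z hz).le
  have hu' : ∀ w ∈ V, F u w = b w := fun w hw => by
    simpa [G, sub_eq_zero] using congrArg (· ⟨w, hw⟩) hu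
  refine ⟨u, u.2, ?_, hu'⟩
  by_contra! h
  exact (hcoer u h.le).ne (hu' u u.2).symm

theorem exists_forall_le_apply_of_bounded
    (hrefl : Function.Surjective (NormedSpace.inclusionInDoubleDual ℝ X)) {ι : Type*}
    {l : Filter ι} [l.NeBot] {u : ι → X} {M : ℝ} (hu : ∀ i, ‖u i‖ ≤ M) :
    ∃ u₀ : X, ∀ (φ : StrongDual ℝ X) (c : ℝ), (∀ᶠ i in l, c ≤ φ (u i)) → c ≤ φ u₀ := by
  let v : ι → WeakDual ℝ (StrongDual ℝ X) := fun i =>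
    StrongDual.toWeakDual (NormedSpace.inclusionInDoubleDual ℝ X (u i))
  have hv : ∀ i, v i ∈ WeakDual.toStrongDual ⁻¹' closedBall 0 M := fun i =>
    show dist _ 0 ≤ M from (dist_zero_right (WeakDual.toStrongDual (v i))).trans_le
      ((NormedSpace.double_dual_bound ℝ X (u i)).trans (hu i))
  obtain ⟨x, -, hx⟩ := (WeakDual.isCompact_closedBall 0 M).exists_mapClusterPt (f := l) (u := v)
    (tendsto_principal.2 (Eventually.of_forall hv))
  obtain ⟨u₀, hu₀⟩ := hrefl (WeakDual.toStrongDual x)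
  refine ⟨u₀, fun φ c hc => ?_⟩
  obtain ⟨U, hU, hvU⟩ := mapClusterPt_iff_ultrafilter.1 hx
  have hcx : c ≤ x φ := (isClosed_le continuous_const (WeakDual.eval_continuous φ)).mem_of_tendsto
    hvU (hU hc)
  rwa [← NormedSpace.dual_def ℝ X u₀ φ, hu₀]

end Reflexive

theorem browder_minty_general
    {X : Type*} [NormedAddCommGroup X] [NormedSpace ℝ X]
    (hrefl : Function.Surjective (NormedSpace.inclusionInDoubleDual ℝ X))
    (F : X → StrongDual ℝ X)
    (hmono : ∀ u v : X, 0 ≤ (F u - F v) (u - v))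
    (hhemi : ∀ u v w : X, Continuous fun t : ℝ => F (u + t • v) w)
    (hcoer : Filter.Tendsto (fun v : X => F v v / ‖v‖)
      (Filter.comap norm Filter.atTop) Filter.atTop) :
    Function.Surjective F ∧
      ((∀ u v : X, u ≠ v → 0 < (F u - F v) (u - v)) → Function.Bijective F) := by
  have hsurj : Function.Surjective F := fun b => by
    obtain ⟨M, hM⟩ := exists_forall_lt_apply_self_of_tendsto hcoer b
    choose u hu_mem hu_norm hu_eq using fun S : Finset X =>
      IsMonotoneOperator.exists_galerkin hmono hhemi hM (Submodule.span ℝ S)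
    obtain ⟨u₀, hu₀⟩ := exists_forall_le_apply_of_bounded hrefl (l := atTop) hu_norm
    refine ⟨u₀, Hemicontinuous.eq_of_forall_nonneg hhemi fun w => ?_⟩
    have hw : ∀ᶠ S in atTop, (b - F w) w ≤ (b - F w) (u S) := by
      filter_upwards [eventually_ge_atTop {w}] with S hS
      have hwS : u S - w ∈ Submodule.span ℝ (S : Set X) :=
        sub_mem (hu_mem S) (Submodule.subset_span (Finset.singleton_subset_iff.1 hS))
      have := hmono (u S) w
      rwa [sub_apply, hu_eq S _ hwS, ← sub_apply, map_sub, sub_nonneg] at this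
    simpa [map_sub, sub_nonneg] using hu₀ _ _ hw
  refine ⟨hsurj, fun hstrict => ⟨fun a c hac => ?_, hsurj⟩⟩
  by_contra hne
  simpa [hac] using hstrict a c hne

/-- Browder–Minty: a monotone, hemicontinuous, coercive operator from a
real reflexive Banach space to its dual is surjective; if moreover it is strictly
monotone, it is bijective. -/
theorem browder_minty
    {X : Type*} [NormedAddCommGroup X] [NormedSpace ℝ X] [CompleteSpace X]
    (hrefl : Function.Surjective (NormedSpace.inclusionInDoubleDual ℝ X))
    (F : X → StrongDual ℝ X)
    (hmono : ∀ u v : X, 0 ≤ (F u - F v) (u - v))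
    (hhemi : ∀ u v w : X, Continuous fun t : ℝ => F (u + t • v) w)
    (hcoer : Filter.Tendsto (fun v : X => F v v / ‖v‖)
      (Filter.comap norm Filter.atTop) Filter.atTop) :
    Function.Surjective F ∧
      ((∀ u v : X, u ≠ v → 0 < (F u - F v) (u - v)) → Function.Bijective F) :=
  browder_minty_general hrefl F hmono hhemi hcoer
end

section
/- Let X and Y be real reflexive Banach spaces and let j : X → Y be an injective continuous linear map. Let T > 0 and let u : [0,T] → X be such that: (i) there exists M ≥ 0 with ‖u(t)‖_X ≤ M for almost every t ∈ [0,T]; (ii) t ↦ j(u(t)) is weakly continuous from [0,T] to Y, i.e. for every continuous linear functional y' on Y the map t ↦ y'(j(u(t))) is continuous on [0,T]. Then u is weakly continuous from [0,T] to X: for every continuous linear functional x' on X the map t ↦ x'(u(t)) is continuous on [0,T]; moreover ‖u(t)‖_X ≤ M for every t ∈ [0,T]. -/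
/-!
Embed `X` into the weak-* dual of its dual. Along a filter on which `u` is eventually bounded by
`M`, the image of `u` eventually lies in a closed ball, which is weak-* compact (Banach–Alaoglu).
By reflexivity every cluster point there comes from some `x ∈ X`, and testing against the
functionals `y' ∘ j` forces `j x = j x₀`, hence `x = x₀`. A unique cluster point in a compact set
is a limit, which gives weak convergence `u → x₀` and, the ball being weak-* closed, `‖x₀‖ ≤ M`.
Applied along `𝓝[[0, T]] t` this is weak continuity; applied along the set where `‖u‖ ≤ M`, which
is dense in `[0, T]` since its complement is null, it gives the bound everywhere.
-/

open MeasureTheory Filter Topology NormedSpace Set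

section Reflexive

variable {𝕜 X Y : Type*} [RCLike 𝕜] [NormedAddCommGroup X] [NormedSpace 𝕜 X]
  [NormedAddCommGroup Y] [NormedSpace 𝕜 Y]
  {j : X →L[𝕜] Y} {α : Type*} {F : Filter α} {u : α → X} {M : ℝ} {x x₀ : X}

variable (𝕜 X) in
noncomputable def inclusionInWeakBidual (x : X) : WeakDual 𝕜 (StrongDual 𝕜 X) :=
  StrongDual.toWeakDual (inclusionInDoubleDual 𝕜 X x)

theorem inclusionInWeakBidual_mem_closedBall_iff :
    inclusionInWeakBidual 𝕜 X x ∈ WeakDual.toStrongDual ⁻¹' Metric.closedBall 0 M ↔ ‖x‖ ≤ M := by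
  have h : dist (inclusionInDoubleDual 𝕜 X x) 0 = ‖x‖ :=
    (dist_zero_right (inclusionInDoubleDual 𝕜 X x)).trans ((inclusionInDoubleDualLi 𝕜).norm_map x)
  exact Iff.of_eq (congrArg (· ≤ M) h)

theorem eq_of_mapClusterPt_inclusionInWeakBidual (hj : Function.Injective j)
    (hu : ∀ y' : StrongDual 𝕜 Y, Tendsto (fun s => y' (j (u s))) F (𝓝 (y' (j x₀))))
    (hx : MapClusterPt (inclusionInWeakBidual 𝕜 X x) F (inclusionInWeakBidual 𝕜 X ∘ u)) :
    x = x₀ := by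
  refine hj <| (SeparatingDual.eq_iff_forall_dual_eq (R := 𝕜)).mpr fun y' => ?_
  have hcluster : MapClusterPt (y' (j x)) F (fun s => y' (j (u s))) :=
    hx.continuousAt_comp (f := fun φ : WeakDual 𝕜 (StrongDual 𝕜 X) => φ (y'.comp j))
      (WeakDual.eval_continuous (y'.comp j)).continuousAt
  exact eq_of_nhds_neBot (hcluster.clusterPt.mono (hu y'))

theorem tendsto_inclusionInWeakBidual_of_bounded_of_tendsto_comp
    (hrefl : Function.Surjective (inclusionInDoubleDual 𝕜 X))
    (hj : Function.Injective j) (hbdd : ∀ᶠ s in F, ‖u s‖ ≤ M)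
    (hu : ∀ y' : StrongDual 𝕜 Y, Tendsto (fun s => y' (j (u s))) F (𝓝 (y' (j x₀)))) :
    Tendsto (inclusionInWeakBidual 𝕜 X ∘ u) F (𝓝 (inclusionInWeakBidual 𝕜 X x₀)) := by
  refine (WeakDual.isCompact_closedBall 0 M).tendsto_nhds_of_unique_mapClusterPt ?_ ?_
  · exact hbdd.mono fun s => inclusionInWeakBidual_mem_closedBall_iff.mpr
  · intro φ _ hφ
    obtain ⟨x, rfl⟩ := hrefl (WeakDual.toStrongDual φ)
    rw [eq_of_mapClusterPt_inclusionInWeakBidual hj hu hφ]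
    rfl

theorem tendsto_dual_apply_of_bounded_of_tendsto_comp
    (hrefl : Function.Surjective (inclusionInDoubleDual 𝕜 X))
    (hj : Function.Injective j) (hbdd : ∀ᶠ s in F, ‖u s‖ ≤ M)
    (hu : ∀ y' : StrongDual 𝕜 Y, Tendsto (fun s => y' (j (u s))) F (𝓝 (y' (j x₀))))
    (x' : StrongDual 𝕜 X) : Tendsto (fun s => x' (u s)) F (𝓝 (x' x₀)) :=
  ((WeakDual.eval_continuous x').tendsto _).comp
    (tendsto_inclusionInWeakBidual_of_bounded_of_tendsto_comp hrefl hj hbdd hu)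

theorem norm_le_of_bounded_of_tendsto_comp
    (hrefl : Function.Surjective (inclusionInDoubleDual 𝕜 X))
    (hj : Function.Injective j) [F.NeBot] (hbdd : ∀ᶠ s in F, ‖u s‖ ≤ M)
    (hu : ∀ y' : StrongDual 𝕜 Y, Tendsto (fun s => y' (j (u s))) F (𝓝 (y' (j x₀)))) :
    ‖x₀‖ ≤ M := by
  have hclosed := (WeakDual.isCompact_closedBall (0 : StrongDual 𝕜 (StrongDual 𝕜 X)) M).isClosed
  refine inclusionInWeakBidual_mem_closedBall_iff.mp (hclosed.mem_of_tendsto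
    (tendsto_inclusionInWeakBidual_of_bounded_of_tendsto_comp hrefl hj hbdd hu) ?_)
  exact hbdd.mono fun s => inclusionInWeakBidual_mem_closedBall_iff.mpr

end Reflexive

theorem IsOpen.subset_closure_inter_setOf_of_ae_restrict {X : Type*} [TopologicalSpace X]
    [MeasurableSpace X] [OpensMeasurableSpace X] {μ : Measure X} [μ.IsOpenPosMeasure]
    {U : Set X} (hU : IsOpen U) {p : X → Prop} (hp : ∀ᵐ x ∂μ.restrict U, p x) :
    U ⊆ closure (U ∩ {x | p x}) := by
  have hdense : Dense {x | x ∈ U → p x} :=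
    μ.dense_of_ae ((ae_restrict_iff' hU.measurableSet).mp hp)
  exact (hdense.open_subset_closure_inter hU).trans
    (closure_mono fun x hx => ⟨hx.1, hx.2 hx.1⟩)

theorem weak_continuity_from_bounded_and_weakly_continuous_embedding_general
    {X Y : Type*} [NormedAddCommGroup X] [NormedSpace ℝ X]
    [NormedAddCommGroup Y] [NormedSpace ℝ Y]
    (hreflX : Function.Surjective (NormedSpace.inclusionInDoubleDual ℝ X))
    (j : X →L[ℝ] Y) (hj : Function.Injective j)
    (T : ℝ) (hT : 0 < T) (u : ℝ → X) (M : ℝ)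
    (hbdd : ∀ᵐ t ∂(volume.restrict (Set.Icc (0 : ℝ) T)), ‖u t‖ ≤ M)
    (hweak : ∀ y' : StrongDual ℝ Y,
      ContinuousOn (fun t => y' (j (u t))) (Set.Icc (0 : ℝ) T)) :
    (∀ x' : StrongDual ℝ X,
      ContinuousOn (fun t => x' (u t)) (Set.Icc (0 : ℝ) T)) ∧
    (∀ t ∈ Set.Icc (0 : ℝ) T, ‖u t‖ ≤ M) := by
  have hdense : Icc 0 T ⊆ closure (Ioo 0 T ∩ {t | ‖u t‖ ≤ M}) := by
    rw [← closure_Ioo hT.ne]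
    refine closure_minimal ?_ isClosed_closure
    refine isOpen_Ioo.subset_closure_inter_setOf_of_ae_restrict (μ := volume) ?_
    rwa [restrict_Ioo_eq_restrict_Icc]
  have hbound : ∀ t ∈ Icc 0 T, ‖u t‖ ≤ M := by
    intro t ht
    have : (𝓝[Ioo 0 T ∩ {t | ‖u t‖ ≤ M}] t).NeBot :=
      mem_closure_iff_nhdsWithin_neBot.mp (hdense ht)
    have hsub : Ioo 0 T ∩ {t | ‖u t‖ ≤ M} ⊆ Icc 0 T := inter_subset_left.trans Ioo_subset_Icc_self
    exact norm_le_of_bounded_of_tendsto_comp hreflX hj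
      (eventually_mem_nhdsWithin.mono fun _ hs => hs.2)
      fun y' => (hweak y' t ht).mono_left (nhdsWithin_mono t hsub)
  refine ⟨fun x' t ht => ?_, hbound⟩
  exact tendsto_dual_apply_of_bounded_of_tendsto_comp hreflX hj
    (eventually_mem_nhdsWithin.mono hbound) (fun y' => hweak y' t ht) x'

/-- If `u : [0,T] → X` is essentially bounded by `M` and weakly continuous
into a reflexive Banach space `Y` via an injective continuous linear map `j : X → Y`,
where `X` is reflexive, then `u` is weakly continuous into `X` and bounded by `M`
everywhere on `[0,T]`. -/
theorem weak_continuity_from_bounded_and_weakly_continuous_embedding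
    {X Y : Type*} [NormedAddCommGroup X] [NormedSpace ℝ X] [CompleteSpace X]
    [NormedAddCommGroup Y] [NormedSpace ℝ Y] [CompleteSpace Y]
    (hreflX : Function.Surjective (NormedSpace.inclusionInDoubleDual ℝ X))
    (hreflY : Function.Surjective (NormedSpace.inclusionInDoubleDual ℝ Y))
    (j : X →L[ℝ] Y) (hj : Function.Injective j)
    (T : ℝ) (hT : 0 < T) (u : ℝ → X) (M : ℝ) (hM : 0 ≤ M)
    (hbdd : ∀ᵐ t ∂(volume.restrict (Set.Icc (0 : ℝ) T)), ‖u t‖ ≤ M)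
    (hweak : ∀ y' : StrongDual ℝ Y,
      ContinuousOn (fun t => y' (j (u t))) (Set.Icc (0 : ℝ) T)) :
    (∀ x' : StrongDual ℝ X,
      ContinuousOn (fun t => x' (u t)) (Set.Icc (0 : ℝ) T)) ∧
    (∀ t ∈ Set.Icc (0 : ℝ) T, ‖u t‖ ≤ M) :=
  weak_continuity_from_bounded_and_weakly_continuous_embedding_general hreflX j hj T hT u M hbdd
    hweak
end

section
/- Let H be a real Hilbert space, T > 0, and let u : ℝ → H be twice continuously differentiable on [0,T] with u(0) = 0 and u'(0) = 0. Assume that ∫₀^s ⟪u''(t), u(t) + u'(t)⟫ dt ≤ 0 for every s ∈ [0,T]. Then u(t) = 0 for every t ∈ [0,T]. (This is the analytic core of the uniqueness theorem for the nonlinear viscoelastic system: the difference u = u₁ − u₂ of two solutions satisfies this integral inequality because the monotonicity of G makes the stress-difference term nonnegative.) -/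
open scoped RealInnerProductSpace
open MeasureTheory Set

/-!
Put `φ s = ‖u s‖² + ∫₀ˢ ‖u'‖²`. Integrating by parts,
`2 ∫₀ˢ ⟪u'', u + u'⟫ = 2 ⟪u' s, u s⟫ + ‖u' s‖² - 2 ∫₀ˢ ‖u'‖²`, so the hypothesis says
`φ' s = 2 ⟪u' s, u s⟫ + ‖u' s‖² ≤ 2 ∫₀ˢ ‖u'‖² ≤ 2 φ s`. As `φ 0 = 0`, Grönwall's inequality
gives `φ ≤ 0`, hence `u = 0`.
-/

theorem ContinuousOn.hasDerivWithinAt_integral_Icc {E : Type*} [NormedAddCommGroup E]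
    [NormedSpace ℝ E] [CompleteSpace E] {f : ℝ → E} {a b t : ℝ}
    (hf : ContinuousOn f (Icc a b)) (ht : t ∈ Icc a b) :
    HasDerivWithinAt (fun s => ∫ x in a..s, f x) (f t) (Icc a b) t := by
  have : Fact (t ∈ Icc a b) := ⟨ht⟩
  exact intervalIntegral.integral_hasDerivWithinAt_right
    ((hf.mono (Icc_subset_Icc le_rfl ht.2)).intervalIntegrable_of_Icc ht.1)
    ⟨Icc a b, self_mem_nhdsWithin, hf.aestronglyMeasurable measurableSet_Icc⟩ (hf t ht)

theorem intervalIntegral.integral_eq_sub_of_hasDerivWithinAt_Icc {E : Type*}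
    [NormedAddCommGroup E] [NormedSpace ℝ E] [CompleteSpace E] {f f' : ℝ → E} {a b : ℝ}
    (hab : a ≤ b) (hf : ∀ t ∈ Icc a b, HasDerivWithinAt f (f' t) (Icc a b) t)
    (hf' : IntervalIntegrable f' volume a b) :
    ∫ t in a..b, f' t = f b - f a :=
  integral_eq_sub_of_hasDerivAt_of_le hab (fun t ht => (hf t ht).continuousWithinAt)
    (fun t ht => (hf t (Ioo_subset_Icc_self ht)).hasDerivAt (Icc_mem_nhds ht.1 ht.2)) hf'

theorem nonpos_of_hasDerivWithinAt_le_mul {f f' : ℝ → ℝ} {K a b : ℝ}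
    (hf : ∀ t ∈ Icc a b, HasDerivWithinAt f (f' t) (Icc a b) t) (ha : f a ≤ 0)
    (bound : ∀ t ∈ Icc a b, f' t ≤ K * f t) : ∀ t ∈ Icc a b, f t ≤ 0 := by
  intro t ht
  have := le_gronwallBound_of_liminf_deriv_right_le (δ := 0) (ε := 0)
    (fun t ht => (hf t ht).continuousWithinAt)
    (fun x hx r hr => ((hf x (Ico_subset_Icc_self hx)).mono_of_mem_nhdsWithin
      (Icc_mem_nhdsGE_of_mem hx)).liminf_right_slope_le hr)
    ha (fun x hx => by simpa using bound x (Ico_subset_Icc_self hx)) t ht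
  simpa [gronwallBound_ε0_δ0] using this

section SecondOrder

variable {H : Type*} [NormedAddCommGroup H] [InnerProductSpace ℝ H] {u u' u'' : ℝ → H}
  {s : Set ℝ} {t : ℝ}

theorem HasDerivWithinAt.two_mul_inner_add_inner_self (hu : HasDerivWithinAt u (u' t) s t)
    (hu' : HasDerivWithinAt u' (u'' t) s t) :
    HasDerivWithinAt (fun t => 2 * ⟪u' t, u t⟫ + ⟪u' t, u' t⟫)
      (2 * ⟪u'' t, u t + u' t⟫ + 2 * ⟪u' t, u' t⟫) s t := by
  refine (((hu'.inner ℝ hu).const_mul 2).add (hu'.inner ℝ hu')).congr_deriv ?_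
  rw [inner_add_right, real_inner_comm (u' t) (u'' t)]
  ring

theorem integral_inner_second_deriv_add_deriv {a b : ℝ} (hab : a ≤ b)
    (hu : ∀ t ∈ Icc a b, HasDerivWithinAt u (u' t) (Icc a b) t)
    (hu' : ∀ t ∈ Icc a b, HasDerivWithinAt u' (u'' t) (Icc a b) t)
    (hu'' : ContinuousOn u'' (Icc a b)) :
    2 * ∫ t in a..b, ⟪u'' t, u t + u' t⟫ =
      (2 * ⟪u' b, u b⟫ + ⟪u' b, u' b⟫) - (2 * ⟪u' a, u a⟫ + ⟪u' a, u' a⟫) -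
        2 * ∫ t in a..b, ⟪u' t, u' t⟫ := by
  have hcu : ContinuousOn u (Icc a b) := fun t ht => (hu t ht).continuousWithinAt
  have hcu' : ContinuousOn u' (Icc a b) := fun t ht => (hu' t ht).continuousWithinAt
  have hi₁ : IntervalIntegrable (fun t => ⟪u'' t, u t + u' t⟫) volume a b :=
    (hu''.inner (hcu.add hcu')).intervalIntegrable_of_Icc hab
  have hi₂ : IntervalIntegrable (fun t => ⟪u' t, u' t⟫) volume a b :=
    (hcu'.inner hcu').intervalIntegrable_of_Icc hab
  have hFTC := intervalIntegral.integral_eq_sub_of_hasDerivWithinAt_Icc hab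
    (fun t ht => (hu t ht).two_mul_inner_add_inner_self (hu' t ht))
    ((hi₁.const_mul 2).add (hi₂.const_mul 2))
  rw [intervalIntegral.integral_add (hi₁.const_mul 2) (hi₂.const_mul 2),
    intervalIntegral.integral_const_mul, intervalIntegral.integral_const_mul] at hFTC
  linarith

end SecondOrder

theorem uniqueness_core_general
    {H : Type*} [NormedAddCommGroup H] [InnerProductSpace ℝ H]
    (T : ℝ) (u u' u'' : ℝ → H)
    (hu : ∀ t ∈ Set.Icc (0 : ℝ) T, HasDerivWithinAt u (u' t) (Set.Icc (0 : ℝ) T) t)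
    (hu' : ∀ t ∈ Set.Icc (0 : ℝ) T, HasDerivWithinAt u' (u'' t) (Set.Icc (0 : ℝ) T) t)
    (hu'' : ContinuousOn u'' (Set.Icc (0 : ℝ) T))
    (h0 : u 0 = 0) (h1 : u' 0 = 0)
    (hint : ∀ s ∈ Set.Icc (0 : ℝ) T, (∫ t in (0 : ℝ)..s, ⟪u'' t, u t + u' t⟫) ≤ 0) :
    ∀ t ∈ Set.Icc (0 : ℝ) T, u t = 0 := by
  set G : ℝ → ℝ := fun s => ∫ t in (0 : ℝ)..s, ⟪u' t, u' t⟫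
  have hG : ∀ s ∈ Icc 0 T, 0 ≤ G s := fun s hs =>
    intervalIntegral.integral_nonneg hs.1 fun _ _ => real_inner_self_nonneg
  have hcu' : ContinuousOn u' (Icc 0 T) := fun t ht => (hu' t ht).continuousWithinAt
  have hφ : ∀ s ∈ Icc 0 T, HasDerivWithinAt (fun s => ⟪u s, u s⟫ + G s)
      (2 * ⟪u' s, u s⟫ + ⟪u' s, u' s⟫) (Icc 0 T) s := fun s hs =>
    (((hu s hs).inner ℝ (hu s hs)).add
      ((hcu'.inner hcu').hasDerivWithinAt_integral_Icc hs)).congr_deriv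
      (by rw [real_inner_comm (u s)]; ring)
  have hbound : ∀ s ∈ Icc 0 T,
      2 * ⟪u' s, u s⟫ + ⟪u' s, u' s⟫ ≤ 2 * (⟪u s, u s⟫ + G s) := by
    intro s hs
    have hsub : Icc 0 s ⊆ Icc 0 T := Icc_subset_Icc le_rfl hs.2
    have henergy := integral_inner_second_deriv_add_deriv hs.1
      (fun t ht => (hu t (hsub ht)).mono hsub) (fun t ht => (hu' t (hsub ht)).mono hsub)
      (hu''.mono hsub)
    simp only [h0, h1, inner_zero_left, mul_zero, add_zero, sub_zero] at henergy
    linarith [hint s hs, real_inner_self_nonneg (x := u s)]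
  intro t ht
  have hφt := nonpos_of_hasDerivWithinAt_le_mul hφ (by simp [G, h0]) hbound t ht
  exact real_inner_self_nonpos.mp (by linarith [hG t ht])

/-- Analytic core of the uniqueness theorem.  If `u : [0,T] → H` is twice
continuously differentiable with `u(0) = 0`, `u'(0) = 0`, and
`∫₀ˢ ⟪u''(t), u(t) + u'(t)⟫ dt ≤ 0` for every `s ∈ [0,T]`, then `u ≡ 0` on `[0,T]`. -/
theorem uniqueness_core
    {H : Type*} [NormedAddCommGroup H] [InnerProductSpace ℝ H] [CompleteSpace H]
    (T : ℝ) (hT : 0 < T) (u u' u'' : ℝ → H)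
    (hu : ∀ t ∈ Set.Icc (0 : ℝ) T, HasDerivWithinAt u (u' t) (Set.Icc (0 : ℝ) T) t)
    (hu' : ∀ t ∈ Set.Icc (0 : ℝ) T, HasDerivWithinAt u' (u'' t) (Set.Icc (0 : ℝ) T) t)
    (hu'' : ContinuousOn u'' (Set.Icc (0 : ℝ) T))
    (h0 : u 0 = 0) (h1 : u' 0 = 0)
    (hint : ∀ s ∈ Set.Icc (0 : ℝ) T, (∫ t in (0 : ℝ)..s, ⟪u'' t, u t + u' t⟫) ≤ 0) :
    ∀ t ∈ Set.Icc (0 : ℝ) T, u t = 0 :=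
  uniqueness_core_general T u u' u'' hu hu' hu'' h0 h1 hint
end
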